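/- Let s be an (n,r)-sequence and F(s) the freedom matroid. Then: (a) for every (n,r)-sequence u, if g_u(F(s)) ≠ 0 then u ⊵ s; and (b) g_s(F(s)) ≠ 0. -/

import Mathlib

open MvPolynomial
open scoped Classical

/-- The dominance order on bit sequences: `Dominates s t` means `s ⊵ t`, i.e. every
prefix of `s` has at least as many `1`s (`true`s) as the corresponding prefix of `t`. -/
def Dominates (s t : List Bool) : Prop :=
  ∀ j : ℕ, (t.take j).count true ≤ (s.take j).count true

/-- The indicator bit sequence of a subset `B` of `{1,…,n}` (modelled as `Fin n`). -/
def indList {n : ℕ} (B : Finset (Fin n)) : List Bool :=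
  List.ofFn fun i : Fin n => decide (i ∈ B)

/-- The finset of `(n,r)`-sequences: bit sequences of length `n` with exactly `r` ones. -/
def seqs (n r : ℕ) : Finset (List Bool) :=
  ((Finset.univ : Finset (Fin n → Bool)).image List.ofFn).filter fun l => l.count true = r

/-- The Tutte polynomial determined by a rank function `rk` on subsets of an `n`-element
ground set, where `r` is the rank of the whole ground set.  The variable `X 0` plays the
role of `x` and `X 1` plays the role of `y`. -/
noncomputable def tutte (K : Type*) [Field K] {n : ℕ} (r : ℕ) (rk : Finset (Fin n) → ℕ) :
    MvPolynomial (Fin 2) K :=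
  ∑ A : Finset (Fin n), (X 0 - 1) ^ (r - rk A) * (X 1 - 1) ^ (A.card - rk A)

/-- `B` is a basis of the freedom matroid `F(s)`: it has `wt s` elements and its
indicator sequence is dominated by `s`. -/
def IsFreedomBasis (s : List Bool) (B : Finset (Fin s.length)) : Prop :=
  B.card = s.count true ∧ Dominates s (indList B)

/-- The rank function of the freedom matroid `F(s)`: the rank of a set is the largest
size of its intersection with a basis. -/
noncomputable def freedomRk (s : List Bool) (A : Finset (Fin s.length)) : ℕ :=
  (Finset.univ.filter fun B => IsFreedomBasis s B).sup fun B => (A ∩ B).card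

/-- The Tutte polynomial of the freedom matroid `F(s)`. -/
noncomputable def freedomTutte (K : Type*) [Field K] (s : List Bool) :
    MvPolynomial (Fin 2) K :=
  tutte K (s.count true) (freedomRk s)

/-- The rank of a set in a matroid: the largest cardinality of an independent subset. -/
noncomputable def mrank {n : ℕ} (M : Matroid (Fin n)) (A : Set (Fin n)) : ℕ :=
  (Finset.univ.filter fun I : Finset (Fin n) =>
    M.Indep ↑I ∧ (↑I : Set (Fin n)) ⊆ A).sup Finset.card

/-- The set `{π(1),…,π(m)}` of the first `m` values of a permutation. -/
def prefFinset {n : ℕ} (π : Equiv.Perm (Fin n)) (m : ℕ) : Finset (Fin n) :=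
  (Finset.univ.filter fun i : Fin n => (i : ℕ) < m).image π

/-- The rank sequence of a permutation `π` with respect to a rank function `rk`:
its `j`-th entry is `1` (`true`) exactly when `rk {π(1),…,π(j)} = rk {π(1),…,π(j-1)} + 1`. -/
def rankSeq {n : ℕ} (rk : Finset (Fin n) → ℕ) (π : Equiv.Perm (Fin n)) : List Bool :=
  List.ofFn fun j : Fin n =>
    decide (rk (prefFinset π ((j : ℕ) + 1)) = rk (prefFinset π (j : ℕ)) + 1)

/-- `gCoeff rk l` is the number of permutations of the ground set whose rank sequence
is the bit sequence `l`; these are the coefficients of the `G`-invariant. -/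
noncomputable def gCoeff {n : ℕ} (rk : Finset (Fin n) → ℕ) (l : List Bool) : ℕ :=
  (Finset.univ.filter fun π : Equiv.Perm (Fin n) => rankSeq rk π = l).card

/-- The `G`-invariant, as an element of the free `K`-module on all bit sequences. -/
noncomputable def Ginv (K : Type*) [Field K] {n : ℕ} (rk : Finset (Fin n) → ℕ) :
    List Bool →₀ K :=
  ∑ π : Equiv.Perm (Fin n), Finsupp.single (rankSeq rk π) 1

/-- The value of the specialization `Sp` on the symbol `[l]`. -/
noncomputable def spPoly (K : Type*) [Field K] (l : List Bool) : MvPolynomial (Fin 2) K :=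
  ∑ m ∈ Finset.range (l.length + 1),
    ((m.factorial * (l.length - m).factorial : ℕ) : K)⁻¹ •
      ((X 0 - 1) ^ (l.count true - (l.take m).count true) *
        (X 1 - 1) ^ (m - (l.take m).count true))

/-- The specialization `Sp` as a linear map on the free module on bit-sequence symbols. -/
noncomputable def SpMap (K : Type*) [Field K] :
    (List Bool →₀ K) →ₗ[K] MvPolynomial (Fin 2) K :=
  Finsupp.linearCombination K (spPoly K)

/-- `G(n,r)`: the span of the `(n,r)`-sequence symbols, a subspace of dimension
`binomial(n,r)` of the free module on all bit sequences. -/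
noncomputable def Gspace (K : Type*) [Field K] (n r : ℕ) : Submodule K (List Bool →₀ K) :=
  Submodule.span K ((fun l => Finsupp.single l (1 : K)) '' ↑(seqs n r))

/-- `T(n,r)`: the span of the Tutte polynomials of all `(n,r)`-matroids. -/
noncomputable def Tspace (K : Type*) [Field K] (n r : ℕ) :
    Submodule K (MvPolynomial (Fin 2) K) :=
  Submodule.span K {p | ∃ M : Matroid (Fin n), M.E = Set.univ ∧ mrank M Set.univ = r ∧
    p = tutte K r fun A : Finset (Fin n) => mrank M ↑A}

/-- The bit sequence `0^a 1^b 0^c 1^d` associated to a quadruple `(a,b,c,d)`;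
such sequences are the join-irreducible ones. -/
def joinList (q : ℕ × ℕ × ℕ × ℕ) : List Bool :=
  List.replicate q.1 false ++ List.replicate q.2.1 true ++
    List.replicate q.2.2.1 false ++ List.replicate q.2.2.2 true

/-- The bit sequence `1^a 0^b 1^c 0^d` associated to a quadruple `(a,b,c,d)`;
such sequences are the meet-irreducible ones. -/
def meetList (q : ℕ × ℕ × ℕ × ℕ) : List Bool :=
  List.replicate q.1 true ++ List.replicate q.2.1 false ++
    List.replicate q.2.2.1 true ++ List.replicate q.2.2.2 false

/-- Quadruples `(a,b,c,d)` with `a+b+c+d = n` and `b+d = r`, indexing the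
join-irreducible `(n,r)`-sequences `0^a 1^b 0^c 1^d`. -/
def joinIdx (n r : ℕ) : Type :=
  {q : ℕ × ℕ × ℕ × ℕ // q.1 + q.2.1 + q.2.2.1 + q.2.2.2 = n ∧ q.2.1 + q.2.2.2 = r}

/-- Quadruples `(a,b,c,d)` with `a+b+c+d = n` and `a+c = r`, indexing the
meet-irreducible `(n,r)`-sequences `1^a 0^b 1^c 0^d`. -/
def meetIdx (n r : ℕ) : Type :=
  {q : ℕ × ℕ × ℕ × ℕ // q.1 + q.2.1 + q.2.2.1 + q.2.2.2 = n ∧ q.1 + q.2.2.1 = r}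

/-- `f(u) = T(F(u); 1, y)`. -/
noncomputable def fEval (K : Type*) [Field K] (u : List Bool) : MvPolynomial (Fin 2) K :=
  MvPolynomial.aeval (fun i : Fin 2 => if i = 0 then 1 else X 1) (freedomTutte K u)

/-- `g(u) = T(F(u); x, 1)`. -/
noncomputable def gEval (K : Type*) [Field K] (u : List Bool) : MvPolynomial (Fin 2) K :=
  MvPolynomial.aeval (fun i : Fin 2 => if i = 0 then X 0 else 1) (freedomTutte K u)

/-- `τ(u) = T(F(u); 1, 1)`. -/
noncomputable def tauEval (K : Type*) [Field K] (u : List Bool) : MvPolynomial (Fin 2) K :=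
  MvPolynomial.aeval (fun _ : Fin 2 => (1 : MvPolynomial (Fin 2) K)) (freedomTutte K u)

/-! Along any permutation the rank grows by at most one per step, so the rank of the set of the
first `j` elements is at most the number of ones among the first `j` entries of the rank
sequence. Conversely, every `j`-element set `A` has rank at least the number of ones among the
first `j` entries of `s`: listing `A` increasingly and keeping the elements listed at positions
where `s` has a one gives an independent set, which extends to a basis by repeatedly adding the
largest missing element. Hence every rank sequence dominates `s`. For the identity permutation
the prefixes are initial segments, whose rank is exactly the prefix count of `s`, so its rank
sequence is `s` itself. -/

open Finset

namespace List

theorem count_true_eq_sum_toNat (l : List Bool) : l.count true = (l.map Bool.toNat).sum := by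
  induction l with
  | nil => rfl
  | cons b l ih => cases b <;> simp [ih]; omega

theorem count_true_take_ofFn {n : ℕ} (g : Fin n → Bool) (j : ℕ) :
    ((ofFn g).take j).count true = #{i : Fin n | (i : ℕ) < j ∧ g i} := by
  rw [count_true_eq_sum_toNat, map_take, map_ofFn, sum_take_ofFn, ← Finset.filter_filter,
    card_filter]
  simp [Bool.toNat, Bool.cond_eq_ite]

theorem count_take_succ (l : List Bool) (j : ℕ) :
    (l.take (j + 1)).count true = (l.take j).count true + if l[j]? = some true then 1 else 0 := by
  rw [take_add_one, count_append]
  rcases l[j]? with _ | _ | _ <;> simp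

theorem count_take_mono (l : List Bool) {j k : ℕ} (h : j ≤ k) :
    (l.take j).count true ≤ (l.take k).count true :=
  (take_sublist_take_left h).count_le true

theorem count_le_count_take_add (l : List Bool) (j : ℕ) :
    l.count true ≤ (l.take j).count true + (l.length - j) := by
  rw [← take_append_drop j l, count_append, take_append_drop]
  have : (l.drop j).count true ≤ l.length - j := count_le_length.trans (length_drop ▸ le_rfl)
  omega

end List

theorem count_take_indList {n : ℕ} (A : Finset (Fin n)) (j : ℕ) :
    ((indList A).take j).count true = #{i ∈ A | i.val < j} := by
  rw [indList, List.count_true_take_ofFn]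
  congr 1
  ext i
  simp [and_comm]

theorem dominates_indList_iff (s : List Bool) {n : ℕ} (A : Finset (Fin n)) :
    Dominates s (indList A) ↔ ∀ j, #{i ∈ A | i.val < j} ≤ (s.take j).count true := by
  simp only [Dominates, count_take_indList]

theorem card_filter_val_lt_add_le {n j : ℕ} {X : Finset (Fin n)}
    (hX : ∀ i : Fin n, j ≤ i.val → i ∈ X) : #{i ∈ X | i.val < j} + (n - j) ≤ #X := by
  have hsplit := card_filter_add_card_filter_not (s := X) (fun i : Fin n => i.val < j)
  have huniv := card_filter_add_card_filter_not (s := univ) (fun i : Fin n => i.val < j)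
  have hupper : #{i : Fin n | ¬ i.val < j} ≤ #{i ∈ X | ¬ i.val < j} :=
    card_le_card fun i hi => by
      simp only [mem_filter, mem_univ, true_and, not_lt] at hi ⊢
      exact ⟨hX i hi, hi⟩
  rw [Fin.card_filter_val_lt, card_univ, Fintype.card_fin] at huniv
  omega

section FreedomMatroid

variable {s : List Bool}

theorem card_le_count_of_dominates {I : Finset (Fin s.length)} (hI : Dominates s (indList I)) :
    #I ≤ s.count true := by
  have := (dominates_indList_iff s I).1 hI s.length
  rwa [List.take_length, filter_true_of_mem fun i _ => i.isLt] at this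

theorem dominates_indList_insert {I : Finset (Fin s.length)} {p : Fin s.length}
    (hI : Dominates s (indList I)) (hcard : #I < s.count true) (hp : p ∉ I)
    (hpmax : ∀ i, p < i → i ∈ I) : Dominates s (indList (insert p I)) := by
  rw [dominates_indList_iff] at hI ⊢
  intro j
  by_cases hpj : p.val < j
  · have hX := card_filter_val_lt_add_le (j := j) (X := insert p I) fun i hi =>
      mem_insert_of_mem (hpmax i (Fin.lt_def.2 (by omega)))
    have := List.count_le_count_take_add s j
    rw [card_insert_of_notMem hp] at hX
    omega
  · rw [filter_insert, if_neg hpj]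
    exact hI j

theorem exists_isFreedomBasis_superset {I : Finset (Fin s.length)}
    (hI : Dominates s (indList I)) : ∃ B, IsFreedomBasis s B ∧ I ⊆ B := by
  induction hk : s.count true - #I generalizing I with
  | zero => exact ⟨I, ⟨by have := card_le_count_of_dominates hI; omega, hI⟩, subset_rfl⟩
  | succ k ih =>
    have hIc : Iᶜ.Nonempty := card_pos.1 <| by
      have := s.count_le_length (a := true)
      rw [card_compl, Fintype.card_fin]
      omega
    set p := Iᶜ.max' hIc
    have hp : p ∉ I := mem_compl.1 (max'_mem _ _)
    have hpmax : ∀ i, p < i → i ∈ I := fun i hi => by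
      by_contra h
      exact not_le.2 hi (le_max' _ i (mem_compl.2 h))
    obtain ⟨B, hB, hIB⟩ :=
      ih (dominates_indList_insert hI (by omega) hp hpmax) (by rw [card_insert_of_notMem hp]; omega)
    exact ⟨B, hB, (subset_insert p I).trans hIB⟩

theorem exists_subset_dominates_card_eq (A : Finset (Fin s.length)) :
    ∃ I ⊆ A, Dominates s (indList I) ∧ #I = (s.take #A).count true := by
  induction A using Finset.induction_on_max with
  | empty => exact ⟨∅, empty_subset _, by simp [dominates_indList_iff], by simp⟩
  | insert a A hlt ih =>
    obtain ⟨I, hIA, hI, hIcard⟩ := ih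
    have haA : a ∉ A := fun h => lt_irrefl a (hlt a h)
    have haI : a ∉ I := fun h => haA (hIA h)
    rw [card_insert_of_notMem haA, List.count_take_succ]
    split_ifs with ha
    · refine ⟨insert a I, insert_subset_insert a hIA, ?_,
        by rw [card_insert_of_notMem haI, hIcard]⟩
      rw [dominates_indList_iff] at hI ⊢
      intro j
      by_cases haj : a.val < j
      · have hA : #(insert a A) ≤ a.val + 1 := by
          rw [← Fin.card_Iic]
          exact card_le_card fun i hi => mem_Iic.2 <|
            (mem_insert.1 hi).elim le_of_eq fun hi => (hlt i hi).le
        calc #{i ∈ insert a I | i.val < j} ≤ #(insert a I) := card_filter_le _ _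
          _ = (s.take (#A + 1)).count true := by
            rw [card_insert_of_notMem haI, hIcard, List.count_take_succ, if_pos ha]
          _ ≤ (s.take j).count true := by
            rw [card_insert_of_notMem haA] at hA
            exact List.count_take_mono s (by omega)
      · rw [filter_insert, if_neg haj]
        exact hI j
    · exact ⟨I, hIA.trans (subset_insert a A), hI, hIcard⟩

theorem le_freedomRk {B : Finset (Fin s.length)} (hB : IsFreedomBasis s B)
    (A : Finset (Fin s.length)) : #(A ∩ B) ≤ freedomRk s A :=
  le_sup (f := fun B => #(A ∩ B)) (mem_filter.2 ⟨mem_univ B, hB⟩)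

theorem freedomRk_le {A : Finset (Fin s.length)} {m : ℕ}
    (h : ∀ B, IsFreedomBasis s B → #(A ∩ B) ≤ m) : freedomRk s A ≤ m :=
  Finset.sup_le fun B hB => h B (mem_filter.1 hB).2

theorem freedomRk_empty : freedomRk s ∅ = 0 :=
  Nat.le_zero.1 (freedomRk_le fun B _ => by simp)

theorem freedomRk_insert_le (A : Finset (Fin s.length)) (x : Fin s.length) :
    freedomRk s (insert x A) ≤ freedomRk s A + 1 :=
  freedomRk_le fun B hB => calc
    #(insert x A ∩ B) ≤ #(insert x (A ∩ B)) := card_le_card <| by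
      rw [insert_inter_distrib]
      exact inter_subset_inter_left (subset_insert x B)
    _ ≤ #(A ∩ B) + 1 := card_insert_le _ _
    _ ≤ freedomRk s A + 1 := Nat.add_le_add_right (le_freedomRk hB A) 1

theorem count_take_card_le_freedomRk (A : Finset (Fin s.length)) :
    (s.take #A).count true ≤ freedomRk s A := by
  obtain ⟨I, hIA, hI, hIcard⟩ := exists_subset_dominates_card_eq A
  obtain ⟨B, hB, hIB⟩ := exists_isFreedomBasis_superset hI
  calc (s.take #A).count true = #I := hIcard.symm
    _ ≤ #(A ∩ B) := card_le_card (subset_inter hIA hIB)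
    _ ≤ freedomRk s A := le_freedomRk hB A

theorem freedomRk_filter_val_lt_le (m : ℕ) :
    freedomRk s {i | i.val < m} ≤ (s.take m).count true :=
  freedomRk_le fun B hB => by
    rw [filter_inter, univ_inter]
    exact (dominates_indList_iff s B).1 hB.2 m

end FreedomMatroid

section RankSeq

variable {n : ℕ}

theorem card_prefFinset (π : Equiv.Perm (Fin n)) (m : ℕ) : #(prefFinset π m) = min n m := by
  rw [prefFinset, card_image_of_injective _ π.injective, Fin.card_filter_val_lt]

theorem prefFinset_zero (π : Equiv.Perm (Fin n)) : prefFinset π 0 = ∅ := by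
  simp [prefFinset]

theorem prefFinset_succ (π : Equiv.Perm (Fin n)) {m : ℕ} (hm : m < n) :
    prefFinset π (m + 1) = insert (π ⟨m, hm⟩) (prefFinset π m) := by
  rw [prefFinset, prefFinset, ← image_insert]
  congr 1
  ext i
  simp [le_iff_eq_or_lt, Fin.ext_iff]

theorem prefFinset_succ_of_le (π : Equiv.Perm (Fin n)) {m : ℕ} (hm : n ≤ m) :
    prefFinset π (m + 1) = prefFinset π m := by
  rw [prefFinset, prefFinset]
  congr 1
  ext i
  simp [i.isLt.trans_le hm, (i.isLt.trans_le hm).le]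

theorem prefFinset_one (m : ℕ) :
    prefFinset (1 : Equiv.Perm (Fin n)) m = ({i | i.val < m} : Finset (Fin n)) := by
  simp [prefFinset]

theorem getElem?_rankSeq (rk : Finset (Fin n) → ℕ) (π : Equiv.Perm (Fin n)) {j : ℕ}
    (hj : j < n) :
    (rankSeq rk π)[j]? =
      some (decide (rk (prefFinset π (j + 1)) = rk (prefFinset π j) + 1)) := by
  simp [rankSeq, hj]

theorem rk_prefFinset_le_count_take_rankSeq {rk : Finset (Fin n) → ℕ} (h0 : rk ∅ = 0)
    (hinsert : ∀ A x, rk (insert x A) ≤ rk A + 1) (π : Equiv.Perm (Fin n)) (j : ℕ) :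
    rk (prefFinset π j) ≤ ((rankSeq rk π).take j).count true := by
  induction j with
  | zero => simp [prefFinset_zero, h0]
  | succ j ih =>
    by_cases hj : j < n
    · have hstep := hinsert (prefFinset π j) (π ⟨j, hj⟩)
      rw [← prefFinset_succ π hj] at hstep
      rw [List.count_take_succ, getElem?_rankSeq rk π hj]
      split_ifs with h <;> simp only [Option.some.injEq, decide_eq_true_eq] at h <;> omega
    · rw [prefFinset_succ_of_le π (by omega)]
      exact ih.trans (List.count_take_mono _ j.le_succ)

theorem gCoeff_ne_zero_iff (rk : Finset (Fin n) → ℕ) (l : List Bool) :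
    gCoeff rk l ≠ 0 ↔ ∃ π, rankSeq rk π = l := by
  simp [gCoeff]

end RankSeq

section FreedomRankSeq

variable {s : List Bool}

theorem count_take_le_freedomRk_prefFinset (π : Equiv.Perm (Fin s.length)) (j : ℕ) :
    (s.take j).count true ≤ freedomRk s (prefFinset π j) := by
  have := count_take_card_le_freedomRk (prefFinset π j)
  rwa [card_prefFinset, min_comm, ← List.take_eq_take_min] at this

theorem dominates_rankSeq_freedomRk (π : Equiv.Perm (Fin s.length)) :
    Dominates (rankSeq (freedomRk s) π) s := fun j =>
  (count_take_le_freedomRk_prefFinset π j).trans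
    (rk_prefFinset_le_count_take_rankSeq freedomRk_empty freedomRk_insert_le π j)

theorem freedomRk_prefFinset_one (j : ℕ) :
    freedomRk s (prefFinset 1 j) = (s.take j).count true :=
  le_antisymm (by rw [prefFinset_one]; exact freedomRk_filter_val_lt_le j)
    (count_take_le_freedomRk_prefFinset 1 j)

theorem rankSeq_freedomRk_one : rankSeq (freedomRk s) 1 = s := by
  refine List.ext_getElem (by simp [rankSeq]) fun j hj hjs => ?_
  have := getElem?_rankSeq (freedomRk s) 1 hjs
  rw [List.getElem?_eq_getElem hj, Option.some.injEq] at this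
  rw [this, freedomRk_prefFinset_one, freedomRk_prefFinset_one, List.count_take_succ,
    List.getElem?_eq_getElem hjs]
  cases s[j] <;> simp

end FreedomRankSeq

theorem gCoeff_freedom_general (n r : ℕ) (s : List Bool) :
    (∀ u : List Bool, u.length = n → u.count true = r →
        gCoeff (freedomRk s) u ≠ 0 → Dominates u s) ∧
      gCoeff (freedomRk s) s ≠ 0 := by
  refine ⟨fun u _ _ hu => ?_, (gCoeff_ne_zero_iff _ s).2 ⟨1, rankSeq_freedomRk_one⟩⟩
  obtain ⟨π, rfl⟩ := (gCoeff_ne_zero_iff _ u).1 hu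
  exact dominates_rankSeq_freedomRk π

/-- For the freedom matroid `F(s)` of an `(n,r)`-sequence `s`:
(a) `g_u(F(s)) ≠ 0` implies `u ⊵ s`; and (b) `g_s(F(s)) ≠ 0`. -/
theorem gCoeff_freedom (n r : ℕ) (s : List Bool) (hlen : s.length = n)
    (hwt : s.count true = r) :
    (∀ u : List Bool, u.length = n → u.count true = r →
        gCoeff (freedomRk s) u ≠ 0 → Dominates u s) ∧
      gCoeff (freedomRk s) s ≠ 0 :=
  gCoeff_freedom_general n r s
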